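/- Let Ṡ = ∏_{j=1}^m X_j − p_1(1 + ∑_{j=1}^m μ_j^{-1}Ẋ_j) and X = ∏_{j=1}^m X_j(X_j−1) − ∏_{j=1}^m X_j². Then E[Ṡ X] = p_1( p_1∏_{j=1}^m(2+μ_j) − ∏_{j=1}^m(1+3μ_j+μ_j²) − p_1² − 2p_1²s_1 + p_1∏_{j=1}^m(1+μ_j) + p_1∑_{j=1}^m μ_j^{-1}(1+2μ_j)∏_{k≠j}(1+μ_k) ). -/

import Mathlib

/-!
The quantity `Ṡ` is the remainder of the first-order Taylor expansion of `x ↦ ∏ j, x j` at `μ`.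
Multiplied by `∏ j, φ (X j)` it becomes a combination of products of functions of single
coordinates, so by independence its expectation factors into one-dimensional Poisson moments
`E[φ(X)]` and `E[X φ(X)]`. For `φ n = n (n - 1)` and `φ n = n ^ 2` these are combinations of the
factorial moments `E[X (X - 1) ⋯ (X - k + 1)] = μ ^ k`.
-/

open MeasureTheory ProbabilityTheory Finset
open scoped NNReal

/-- The law of `m` independent Poisson random variables `X_j ~ Poisson (μ j)`,
as a product measure on `Fin m → ℕ`. -/
noncomputable def poissonPi {m : ℕ} (μ : Fin m → ℝ≥0) : Measure (Fin m → ℕ) :=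
  Measure.pi fun j => poissonMeasure (μ j)

open Real
open scoped Nat

theorem Nat.cast_mul_descFactorial {R : Type*} [Ring R] (n k : ℕ) :
    (n : R) * n.descFactorial k = n.descFactorial (k + 1) + k * n.descFactorial k := by
  rcases le_or_gt k n with hkn | hnk
  · rw [Nat.descFactorial_succ]
    push_cast [Nat.cast_sub hkn]
    rw [sub_mul, sub_add_cancel]
  · simp [Nat.descFactorial_eq_zero_iff_lt.2 hnk]

theorem Nat.cast_mul_sq_eq_descFactorial (n : ℕ) :
    (n : ℝ) * n ^ 2 = n * n.descFactorial 2 + n * n.descFactorial 1 := by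
  have h := Nat.cast_mul_descFactorial (R := ℝ) n 1
  simp only [Nat.descFactorial_one, Nat.cast_one, one_mul] at h
  rw [← mul_add, sq, h, Nat.descFactorial_one]

namespace ProbabilityTheory

variable (r : ℝ≥0)

lemma hasSum_poissonMeasure_descFactorial (k : ℕ) :
    HasSum (fun n : ℕ => exp (-r) * r ^ n / n ! * n.descFactorial k) ((r : ℝ) ^ k) := by
  rw [← hasSum_nat_add_iff' k]
  have hlow : ∑ n ∈ range k, exp (-r) * r ^ n / n ! * (n.descFactorial k : ℝ) = 0 :=
    sum_eq_zero fun n hn => by simp [Nat.descFactorial_eq_zero_iff_lt.2 (mem_range.1 hn)]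
  have hshift : ∀ n, exp (-r) * r ^ (n + k) / (n + k)! * ((n + k).descFactorial k : ℝ)
      = r ^ k * (exp (-r) * r ^ n / n !) := by
    intro n
    have hfact := Nat.factorial_mul_descFactorial (Nat.le_add_left k n)
    rw [Nat.add_sub_cancel] at hfact
    rw [← hfact]
    have : ((n + k).descFactorial k : ℝ) ≠ 0 := by
      exact_mod_cast (Nat.descFactorial_pos.2 (Nat.le_add_left k n)).ne'
    push_cast
    field_simp
    ring
  simpa [hlow, hshift] using (hasSum_one_poissonMeasure r).mul_left ((r : ℝ) ^ k)


lemma integrable_descFactorial_poissonMeasure (k : ℕ) :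
    Integrable (fun n : ℕ => (n.descFactorial k : ℝ)) (poissonMeasure r) :=
  integrable_poissonMeasure_iff.2 <| by
    simpa only [Real.norm_natCast] using (hasSum_poissonMeasure_descFactorial r k).summable

lemma integral_descFactorial_poissonMeasure (k : ℕ) :
    ∫ n : ℕ, (n.descFactorial k : ℝ) ∂poissonMeasure r = (r : ℝ) ^ k := by
  simpa only [integral_poissonMeasure, smul_eq_mul] using
    (hasSum_poissonMeasure_descFactorial r k).tsum_eq

lemma integrable_natCast_mul_descFactorial_poissonMeasure (k : ℕ) :
    Integrable (fun n : ℕ => (n : ℝ) * n.descFactorial k) (poissonMeasure r) := by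
  simp only [Nat.cast_mul_descFactorial]
  exact (integrable_descFactorial_poissonMeasure r (k + 1)).add
    ((integrable_descFactorial_poissonMeasure r k).const_mul k)

lemma integral_natCast_mul_descFactorial_poissonMeasure (k : ℕ) :
    ∫ n : ℕ, (n : ℝ) * n.descFactorial k ∂poissonMeasure r
      = (r : ℝ) ^ (k + 1) + k * (r : ℝ) ^ k := by
  simp only [Nat.cast_mul_descFactorial]
  rw [integral_add (integrable_descFactorial_poissonMeasure r (k + 1))
    ((integrable_descFactorial_poissonMeasure r k).const_mul k), integral_const_mul,
    integral_descFactorial_poissonMeasure, integral_descFactorial_poissonMeasure]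

lemma integrable_sq_poissonMeasure :
    Integrable (fun n : ℕ => (n : ℝ) ^ 2) (poissonMeasure r) := by
  simpa only [Nat.descFactorial_one, sq] using
    integrable_natCast_mul_descFactorial_poissonMeasure r 1

lemma integral_sq_poissonMeasure :
    ∫ n : ℕ, (n : ℝ) ^ 2 ∂poissonMeasure r = r + (r : ℝ) ^ 2 := by
  have := integral_natCast_mul_descFactorial_poissonMeasure r 1
  simp only [Nat.descFactorial_one, ← sq] at this
  rw [this]
  ring

lemma integrable_natCast_mul_sq_poissonMeasure :
    Integrable (fun n : ℕ => (n : ℝ) * n ^ 2) (poissonMeasure r) := by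
  simp only [Nat.cast_mul_sq_eq_descFactorial]
  exact (integrable_natCast_mul_descFactorial_poissonMeasure r 2).add
    (integrable_natCast_mul_descFactorial_poissonMeasure r 1)

lemma integral_natCast_mul_sq_poissonMeasure :
    ∫ n : ℕ, (n : ℝ) * n ^ 2 ∂poissonMeasure r = r * (1 + 3 * r + (r : ℝ) ^ 2) := by
  simp only [Nat.cast_mul_sq_eq_descFactorial]
  rw [integral_add (integrable_natCast_mul_descFactorial_poissonMeasure r 2)
    (integrable_natCast_mul_descFactorial_poissonMeasure r 1),
    integral_natCast_mul_descFactorial_poissonMeasure,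
    integral_natCast_mul_descFactorial_poissonMeasure]
  push_cast
  ring

end ProbabilityTheory

theorem Finset.prod_ite_eq_mul_prod_erase {ι M : Type*} [CommMonoid M] [Fintype ι]
    [DecidableEq ι] (j : ι) (f g : ι → M) :
    ∏ k, (if k = j then f k else g k) = f j * ∏ k ∈ univ.erase j, g k := by
  rw [prod_ite, filter_eq', filter_ne', if_pos (mem_univ j), prod_singleton]

section ProductMeasure

variable {ι E : Type*} [Fintype ι] [DecidableEq ι] [MeasurableSpace E] {ν : ι → Measure E}
  [∀ i, SigmaFinite (ν i)]

theorem integrable_pi_mul_prod_erase (j : ι) {h g : E → ℝ} (hh : Integrable h (ν j))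
    (hg : ∀ k, Integrable g (ν k)) :
    Integrable (fun x => h (x j) * ∏ k ∈ univ.erase j, g (x k)) (Measure.pi ν) := by
  have := Integrable.fintype_prod (f := fun k => if k = j then h else g) (μ := ν)
    fun k => by split_ifs with hk <;> [exact hk ▸ hh; exact hg k]
  simpa only [ite_apply, prod_ite_eq_mul_prod_erase] using this

theorem integral_pi_mul_prod_erase (j : ι) (h g : E → ℝ) :
    ∫ x, h (x j) * ∏ k ∈ univ.erase j, g (x k) ∂Measure.pi ν
      = (∫ y, h y ∂ν j) * ∏ k ∈ univ.erase j, ∫ y, g y ∂ν k := by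
  have := integral_fintype_prod_eq_prod (fun k => if k = j then h else g) (μ := ν)
  simp only [ite_apply, prod_ite_eq_mul_prod_erase] at this
  rw [this, ← prod_ite_eq_mul_prod_erase j (fun k => ∫ y, h y ∂ν k)]
  congr with k
  split_ifs <;> rfl

end ProductMeasure

theorem integrable_natCast_sub_mul {ν : Measure ℕ} (c : ℝ) {f : ℕ → ℝ} (hf : Integrable f ν)
    (hnf : Integrable (fun n : ℕ => n * f n) ν) :
    Integrable (fun n : ℕ => ((n : ℝ) - c) * f n) ν := by
  simp only [sub_mul]
  exact hnf.sub (hf.const_mul c)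

section ProdRemainder

variable {ι : Type*} [Fintype ι] [DecidableEq ι]

/-- With `a = μ` and `x = X` this is the `Ṡ` of the statement. -/
noncomputable def prodRemainder (a x : ι → ℝ) : ℝ :=
  ∏ i, x i - (∏ i, a i) * (1 + ∑ i, (a i)⁻¹ * (x i - a i))

theorem prodRemainder_mul_prod (a x y : ι → ℝ) :
    prodRemainder a x * ∏ i, y i = ∏ i, x i * y i - (∏ i, a i) * ∏ i, y i
      - (∏ i, a i) * ∑ i, (a i)⁻¹ * ((x i - a i) * y i * ∏ k ∈ univ.erase i, y k) := by
  have h i : (x i - a i) * y i * ∏ k ∈ univ.erase i, y k = (x i - a i) * ∏ k, y k := by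
    rw [mul_assoc, mul_prod_erase univ y (mem_univ i)]
  simp only [h, ← mul_assoc, ← sum_mul, prod_mul_distrib, prodRemainder]
  ring

variable {ν : ι → Measure ℕ} [∀ i, SigmaFinite (ν i)] (a : ι → ℝ) {f : ℕ → ℝ}

section
variable (hf : ∀ i, Integrable f (ν i)) (hnf : ∀ i, Integrable (fun n : ℕ => n * f n) (ν i))
include hf hnf

theorem integrable_pi_prodRemainder_mul_prod :
    Integrable (fun x : ι → ℕ => prodRemainder a (fun i => x i) * ∏ i, f (x i))
      (Measure.pi ν) := by
  simp only [prodRemainder_mul_prod]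
  have hsum i := (integrable_pi_mul_prod_erase i
    (integrable_natCast_sub_mul (a i) (hf i) (hnf i)) hf).const_mul (a i)⁻¹
  exact ((Integrable.fintype_prod hnf).sub' ((Integrable.fintype_prod hf).const_mul _)).sub
    ((integrable_finsetSum _ fun i _ => hsum i).const_mul _)

theorem integral_pi_prodRemainder_mul_prod :
    ∫ x : ι → ℕ, prodRemainder a (fun i => x i) * ∏ i, f (x i) ∂Measure.pi ν
      = ∏ i, (∫ n, n * f n ∂ν i) - (∏ i, a i) * ∏ i, (∫ n, f n ∂ν i)
        - (∏ i, a i) * ∑ i, (a i)⁻¹ * ((∫ n, n * f n ∂ν i) - a i * ∫ n, f n ∂ν i)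
          * ∏ k ∈ univ.erase i, ∫ n, f n ∂ν k := by
  have hcent i :
      ∫ n, ((n : ℝ) - a i) * f n ∂ν i = (∫ n, n * f n ∂ν i) - a i * ∫ n, f n ∂ν i := by
    simp only [sub_mul]
    rw [integral_sub (hnf i) ((hf i).const_mul _), integral_const_mul]
  have hsum i := (integrable_pi_mul_prod_erase i
    (integrable_natCast_sub_mul (a i) (hf i) (hnf i)) hf).const_mul (a i)⁻¹
  simp only [prodRemainder_mul_prod]
  rw [integral_sub ((Integrable.fintype_prod hnf).sub' ((Integrable.fintype_prod hf).const_mul _))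
      ((integrable_finsetSum _ fun i _ => hsum i).const_mul _),
    integral_sub (Integrable.fintype_prod hnf) ((Integrable.fintype_prod hf).const_mul _),
    integral_const_mul, integral_const_mul, integral_finsetSum _ fun i _ => hsum i,
    integral_fintype_prod_eq_prod fun _ (n : ℕ) => (n : ℝ) * f n, integral_fintype_prod_eq_prod]
  congr 2
  refine sum_congr rfl fun i _ => ?_
  rw [integral_const_mul, integral_pi_mul_prod_erase i (fun n : ℕ => ((n : ℝ) - a i) * f n) f,
    hcent, mul_assoc]

end

end ProdRemainder

section PoissonProduct

variable {ι : Type*} [Fintype ι] [DecidableEq ι] (μ : ι → ℝ≥0)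

theorem integral_prodRemainder_mul_prod_descFactorial_two :
    ∫ x : ι → ℕ, prodRemainder (fun j => μ j) (fun j => x j) * ∏ j, ((x j).descFactorial 2 : ℝ)
      ∂Measure.pi (fun j => poissonMeasure (μ j))
      = (∏ j, (μ j : ℝ)) ^ 2 * ∏ j, (2 + (μ j : ℝ)) - (∏ j, (μ j : ℝ)) ^ 3
        - 2 * (∏ j, (μ j : ℝ)) ^ 3 * ∑ j, (μ j : ℝ)⁻¹ := by
  rw [integral_pi_prodRemainder_mul_prod _ (fun j => integrable_descFactorial_poissonMeasure _ 2)
    fun j => integrable_natCast_mul_descFactorial_poissonMeasure _ 2]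
  simp only [integral_descFactorial_poissonMeasure,
    integral_natCast_mul_descFactorial_poissonMeasure, Nat.cast_ofNat]
  have hterm j : (μ j : ℝ)⁻¹ * ((μ j : ℝ) ^ (2 + 1) + 2 * (μ j : ℝ) ^ 2 - μ j * (μ j : ℝ) ^ 2)
      * ∏ k ∈ univ.erase j, (μ k : ℝ) ^ 2 = 2 * (∏ k, (μ k : ℝ)) ^ 2 * (μ j : ℝ)⁻¹ := by
    rw [← mul_prod_erase univ (fun k => (μ k : ℝ)) (mem_univ j), prod_pow]
    rcases eq_or_ne (μ j : ℝ) 0 with h | h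
    · simp [h]
    · field_simp
      ring
  have hfactor j : (μ j : ℝ) ^ (2 + 1) + 2 * (μ j : ℝ) ^ 2 = (μ j : ℝ) ^ 2 * (2 + μ j) := by ring
  simp only [hterm, ← mul_sum]
  simp only [hfactor, prod_mul_distrib, prod_pow]
  ring

theorem integral_prodRemainder_mul_prod_sq :
    ∫ x : ι → ℕ, prodRemainder (fun j => μ j) (fun j => x j) * ∏ j, (x j : ℝ) ^ 2
      ∂Measure.pi (fun j => poissonMeasure (μ j))
      = (∏ j, (μ j : ℝ)) * ∏ j, (1 + 3 * (μ j : ℝ) + (μ j : ℝ) ^ 2)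
        - (∏ j, (μ j : ℝ)) ^ 2 * ∏ j, (1 + (μ j : ℝ))
        - (∏ j, (μ j : ℝ)) ^ 2 * ∑ j, (μ j : ℝ)⁻¹ * (1 + 2 * (μ j : ℝ))
          * ∏ k ∈ univ.erase j, (1 + (μ k : ℝ)) := by
  rw [integral_pi_prodRemainder_mul_prod _ (fun j => integrable_sq_poissonMeasure _)
    fun j => integrable_natCast_mul_sq_poissonMeasure _]
  simp only [integral_sq_poissonMeasure, integral_natCast_mul_sq_poissonMeasure]
  have hfactor j : (μ j : ℝ) + (μ j : ℝ) ^ 2 = μ j * (1 + μ j) := by ring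
  have hterm j : (μ j : ℝ)⁻¹ * ((μ j : ℝ) * (1 + 3 * μ j + (μ j : ℝ) ^ 2)
      - μ j * (μ j + (μ j : ℝ) ^ 2)) * ∏ k ∈ univ.erase j, ((μ k : ℝ) + (μ k : ℝ) ^ 2)
      = (∏ k, (μ k : ℝ))
        * ((μ j : ℝ)⁻¹ * (1 + 2 * μ j) * ∏ k ∈ univ.erase j, (1 + (μ k : ℝ))) := by
    simp only [hfactor, prod_mul_distrib]
    rw [← mul_prod_erase univ (fun k => (μ k : ℝ)) (mem_univ j)]
    rcases eq_or_ne (μ j : ℝ) 0 with h | h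
    · simp [h]
    · field_simp
      ring
  simp only [hterm, ← mul_sum]
  simp only [hfactor, prod_mul_distrib]
  ring

end PoissonProduct

theorem expectation_Sdot_X_general (m : ℕ) (μ : Fin m → ℝ≥0) :
    ∫ x : Fin m → ℕ, (∏ j, (x j : ℝ) - (∏ j, (μ j : ℝ)) * (1 + ∑ j, ((μ j : ℝ))⁻¹ * ((x j : ℝ) - (μ j : ℝ)))) * (∏ j, ((x j : ℝ) * ((x j : ℝ) - 1)) - ∏ j, (x j : ℝ) ^ 2) ∂(poissonPi μ)
      = (∏ j, (μ j : ℝ)) * ((∏ j, (μ j : ℝ)) * ∏ j, (2 + (μ j : ℝ)) - ∏ j, (1 + 3 * (μ j : ℝ) + (μ j : ℝ) ^ 2) - (∏ j, (μ j : ℝ)) ^ 2 - 2 * (∏ j, (μ j : ℝ)) ^ 2 * (∑ j, ((μ j : ℝ))⁻¹) + (∏ j, (μ j : ℝ)) * ∏ j, (1 + (μ j : ℝ)) + (∏ j, (μ j : ℝ)) * ∑ j, ((μ j : ℝ))⁻¹ * (1 + 2 * (μ j : ℝ)) * ∏ k ∈ univ.erase j, (1 + (μ k : ℝ))) := by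
  have hsplit (x : Fin m → ℕ) :
      (∏ j, (x j : ℝ) - (∏ j, (μ j : ℝ)) * (1 + ∑ j, ((μ j : ℝ))⁻¹ * ((x j : ℝ) - (μ j : ℝ))))
        * (∏ j, ((x j : ℝ) * ((x j : ℝ) - 1)) - ∏ j, (x j : ℝ) ^ 2)
      = prodRemainder (fun j => μ j) (fun j => x j) * ∏ j, ((x j).descFactorial 2 : ℝ)
        - prodRemainder (fun j => μ j) (fun j => x j) * ∏ j, (x j : ℝ) ^ 2 := by
    simp only [prodRemainder, Nat.cast_descFactorial_two, mul_sub]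
  simp only [hsplit, poissonPi]
  rw [integral_sub
      (integrable_pi_prodRemainder_mul_prod _ (fun j => integrable_descFactorial_poissonMeasure _ 2)
        fun j => integrable_natCast_mul_descFactorial_poissonMeasure _ 2)
      (integrable_pi_prodRemainder_mul_prod _ (fun j => integrable_sq_poissonMeasure _)
        fun j => integrable_natCast_mul_sq_poissonMeasure _),
    integral_prodRemainder_mul_prod_descFactorial_two, integral_prodRemainder_mul_prod_sq]
  ring

theorem expectation_Sdot_X (m : ℕ) (hm : 2 ≤ m) (μ : Fin m → ℝ≥0) (hμ : ∀ j, 0 < μ j) :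
    ∫ x : Fin m → ℕ, (∏ j, (x j : ℝ) - (∏ j, (μ j : ℝ)) * (1 + ∑ j, ((μ j : ℝ))⁻¹ * ((x j : ℝ) - (μ j : ℝ)))) * (∏ j, ((x j : ℝ) * ((x j : ℝ) - 1)) - ∏ j, (x j : ℝ) ^ 2) ∂(poissonPi μ)
      = (∏ j, (μ j : ℝ)) * ((∏ j, (μ j : ℝ)) * ∏ j, (2 + (μ j : ℝ)) - ∏ j, (1 + 3 * (μ j : ℝ) + (μ j : ℝ) ^ 2) - (∏ j, (μ j : ℝ)) ^ 2 - 2 * (∏ j, (μ j : ℝ)) ^ 2 * (∑ j, ((μ j : ℝ))⁻¹) + (∏ j, (μ j : ℝ)) * ∏ j, (1 + (μ j : ℝ)) + (∏ j, (μ j : ℝ)) * ∑ j, ((μ j : ℝ))⁻¹ * (1 + 2 * (μ j : ℝ)) * ∏ k ∈ univ.erase j, (1 + (μ k : ℝ))) :=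
  expectation_Sdot_X_general m μ
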